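/- Let q be a complex number with |q| = 1, let F and K_u be complex Hilbert spaces, let P be an orthogonal projection and U a unitary on F, and let (W₁,W₂) be a pair of unitaries on K_u with W₁W₂ = qW₂W₁. Then the BCL-1 q-model pair ( (R_q⊗P^⊥U + M_zR_q⊗PU) ⊕ W₁ , (R_{q̄}⊗U*P + R_{q̄}M_z⊗U*P^⊥) ⊕ W₂ ) on (H²⊗F) ⊕ K_u is a q-commutative pair of isometries, i.e., both entries are isometries and V₁V₂ = qV₂V₁. -/

import Mathlib

open ContinuousLinearMap

/-- The model space `(H² ⊗ F) ⊕ K_u`, with `H² ⊗ F` identified with `ℓ²(ℕ, F)`. -/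
noncomputable abbrev BCLModelSpace (F Ku : Type*) [NormedAddCommGroup F]
    [InnerProductSpace ℂ F] [NormedAddCommGroup Ku] [InnerProductSpace ℂ Ku] :=
  WithLp 2 ((lp (fun _ : ℕ => F) 2) × Ku)

/-!
On `ℓ²(ℕ, F)` both operators act coefficientwise. Since `P x ⊥ P^⊥ y` and `|q| = 1`, the
`(n+1)`-st coefficient of `V₁ f` has squared norm `‖P^⊥U f_{n+1}‖² + ‖PU f_n‖²`, so summing over
`n` and using `‖P^⊥ x‖² + ‖P x‖² = ‖x‖²` gives `‖V₁ f‖ = ‖f‖`; `V₂` is handled in the same way.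
For the commutation relation, both products reduce to the shift: `V₁V₂ = M_z` and
`V₂V₁ = q̄ M_z` on `ℓ²(ℕ, F)`, while `W₁W₂ = qW₂W₁` on `K_u`.
-/

def unilateralShift {E : Type*} [Zero E] (f : ℕ → E) : ℕ → E
  | 0 => 0
  | n + 1 => f n

theorem HasSum.unilateralShift {E : Type*} [AddCommMonoid E] [TopologicalSpace E] {f : ℕ → E}
    {a : E} (hf : HasSum f a) : HasSum (unilateralShift f) a :=
  (Nat.succ_injective.hasSum_iff fun n hn => by
    cases n with
    | zero => rfl
    | succ n => exact absurd ⟨n, rfl⟩ hn).1 hf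

theorem lp.hasSum_norm_sq {ι E : Type*} [NormedAddCommGroup E] (f : lp (fun _ : ι => E) 2) :
    HasSum (fun i => ‖f i‖ ^ 2) (‖f‖ ^ 2) := by
  simpa using lp.hasSum_norm (p := 2) (by norm_num) f

theorem lp.norm_eq_of_norm_sq_eq_add_unilateralShift {E G : Type*} [NormedAddCommGroup E]
    [NormedAddCommGroup G] (f : lp (fun _ : ℕ => E) 2) (g : lp (fun _ : ℕ => G) 2)
    (α β : ℕ → ℝ) (hα : ∀ n, 0 ≤ α n) (hβ : ∀ n, 0 ≤ β n) (hf : ∀ n, α n + β n = ‖f n‖ ^ 2)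
    (hg : ∀ n, ‖g n‖ ^ 2 = α n + unilateralShift β n) : ‖g‖ = ‖f‖ := by
  have hαs : Summable α := (lp.hasSum_norm_sq f).summable.of_nonneg_of_le hα fun n => by
    linarith [hβ n, hf n]
  have hβs : Summable β := (lp.hasSum_norm_sq f).summable.of_nonneg_of_le hβ fun n => by
    linarith [hα n, hf n]
  have hgα : HasSum (fun n => ‖g n‖ ^ 2) (∑' n, α n + ∑' n, β n) := by
    simpa only [hg] using hαs.hasSum.add hβs.hasSum.unilateralShift
  have hfα : HasSum (fun n => ‖f n‖ ^ 2) (∑' n, α n + ∑' n, β n) := by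
    simpa only [hf] using hαs.hasSum.add hβs.hasSum
  rw [← sq_eq_sq₀ (norm_nonneg _) (norm_nonneg _), (lp.hasSum_norm_sq g).unique hgα,
    (lp.hasSum_norm_sq f).unique hfα]

theorem WithLp.adjoint_comp_self_eq_one_of_norm_map {𝕜 E G : Type*} [RCLike 𝕜]
    [NormedAddCommGroup E] [InnerProductSpace 𝕜 E] [CompleteSpace E]
    [NormedAddCommGroup G] [InnerProductSpace 𝕜 G] [CompleteSpace G]
    (V : WithLp 2 (E × G) →L[𝕜] WithLp 2 (E × G))
    (h₁ : ∀ x, ‖(V x).ofLp.1‖ = ‖x.ofLp.1‖) (h₂ : ∀ x, ‖(V x).ofLp.2‖ = ‖x.ofLp.2‖) :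
    adjoint V ∘L V = 1 := by
  refine (norm_map_iff_adjoint_comp_self V).1 fun x => ?_
  rw [← sq_eq_sq₀ (norm_nonneg _) (norm_nonneg _), WithLp.prod_norm_sq_eq_of_L2,
    WithLp.prod_norm_sq_eq_of_L2]
  exact congr($(h₁ x) ^ 2 + $(h₂ x) ^ 2)

theorem RCLike.conj_pow_mul_pow_of_norm_eq_one {𝕜 : Type*} [RCLike 𝕜] {q : 𝕜} (hq : ‖q‖ = 1)
    (k : ℕ) : starRingEnd 𝕜 q ^ k * q ^ k = 1 := by
  rw [← mul_pow, RCLike.conj_mul, hq]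
  simp

theorem ContinuousLinearMap.apply_add_one_sub_apply {R M : Type*} [Ring R] [AddCommGroup M]
    [TopologicalSpace M] [IsTopologicalAddGroup M] [Module R M] (P : M →L[R] M) (x : M) :
    P x + (1 - P) x = x := by
  rw [sub_apply, one_apply_eq_self, add_sub_cancel]

section StarProjection

variable {𝕜 E : Type*} [RCLike 𝕜] [NormedAddCommGroup E] [InnerProductSpace 𝕜 E]
  [CompleteSpace E] {P : E →L[𝕜] E}

theorem IsStarProjection.apply_apply (hP : IsStarProjection P) (x : E) : P (P x) = P x :=
  congr($(hP.isIdempotentElem.eq) x)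

theorem IsStarProjection.apply_one_sub_apply (hP : IsStarProjection P) (x : E) :
    P ((1 - P) x) = 0 :=
  congr($(hP.mul_one_sub_self) x)

theorem IsStarProjection.one_sub_apply_apply (hP : IsStarProjection P) (x : E) :
    (1 - P) (P x) = 0 :=
  congr($(hP.one_sub_mul_self) x)

theorem IsStarProjection.inner_apply_one_sub_apply (hP : IsStarProjection P) (x y : E) :
    inner 𝕜 (P x) ((1 - P) y) = 0 := by
  rw [← adjoint_inner_right, ← star_eq_adjoint, hP.isSelfAdjoint.star_eq, hP.apply_one_sub_apply,
    inner_zero_right]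

theorem IsStarProjection.norm_sq_apply_add_one_sub_apply (hP : IsStarProjection P) (x y : E) :
    ‖P x + (1 - P) y‖ ^ 2 = ‖P x‖ ^ 2 + ‖(1 - P) y‖ ^ 2 := by
  simpa only [sq] using
    norm_add_sq_eq_norm_sq_add_norm_sq_of_inner_eq_zero _ _ (hP.inner_apply_one_sub_apply x y)

theorem IsStarProjection.norm_sq_apply_add_norm_sq_one_sub_apply (hP : IsStarProjection P)
    (x : E) : ‖P x‖ ^ 2 + ‖(1 - P) x‖ ^ 2 = ‖x‖ ^ 2 := by
  rw [← hP.norm_sq_apply_add_one_sub_apply, apply_add_one_sub_apply]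

end StarProjection

section BCLModel

variable {𝕜 F : Type*} [RCLike 𝕜] [NormedAddCommGroup F] [InnerProductSpace 𝕜 F]
  [CompleteSpace F] (q : 𝕜) (P U : F →L[𝕜] F)

/-- `R_q ⊗ P^⊥U + M_z R_q ⊗ PU` acting on Taylor coefficient sequences. -/
def bclSeq₁ (f : ℕ → F) : ℕ → F
  | 0 => (1 - P) (U (f 0))
  | n + 1 => q ^ (n + 1) • (1 - P) (U (f (n + 1))) + q ^ n • P (U (f n))

/-- `R_q̄ ⊗ U*P + R_q̄ M_z ⊗ U*P^⊥` acting on Taylor coefficient sequences. -/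
noncomputable def bclSeq₂ (f : ℕ → F) : ℕ → F
  | 0 => adjoint U (P (f 0))
  | n + 1 => starRingEnd 𝕜 q ^ (n + 1) • (adjoint U (P (f (n + 1))) + adjoint U ((1 - P) (f n)))

variable {q P U}

theorem norm_sq_bclSeq₁ (hq : ‖q‖ = 1) (hP : IsStarProjection P) (f : ℕ → F) (n : ℕ) :
    ‖bclSeq₁ q P U f n‖ ^ 2
      = ‖(1 - P) (U (f n))‖ ^ 2 + unilateralShift (fun m => ‖P (U (f m))‖ ^ 2) n := by
  cases n with
  | zero => simp [bclSeq₁, unilateralShift]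
  | succ n =>
    rw [bclSeq₁, unilateralShift, add_comm, ← map_smul (1 - P), ← map_smul P,
      hP.norm_sq_apply_add_one_sub_apply, add_comm]
    simp only [map_smul, norm_smul, norm_pow, hq, one_pow, one_mul]

theorem norm_sq_bclSeq₂ (hq : ‖q‖ = 1) (hP : IsStarProjection P)
    (hU : U ∘L adjoint U = 1) (f : ℕ → F) (n : ℕ) :
    ‖bclSeq₂ q P U f n‖ ^ 2
      = ‖P (f n)‖ ^ 2 + unilateralShift (fun m => ‖(1 - P) (f m)‖ ^ 2) n := by
  have hU' : ∀ x, ‖adjoint U x‖ = ‖x‖ :=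
    (norm_map_iff_adjoint_comp_self _).2 (by rwa [adjoint_adjoint])
  cases n with
  | zero => simp [bclSeq₂, unilateralShift, hU']
  | succ n =>
    rw [bclSeq₂, unilateralShift, norm_smul, ← map_add, hU', mul_pow,
      hP.norm_sq_apply_add_one_sub_apply]
    simp [hq]

theorem lp.norm_eq_of_coe_eq_bclSeq₁ (hq : ‖q‖ = 1) (hP : IsStarProjection P)
    (hU : adjoint U ∘L U = 1) (f g : lp (fun _ : ℕ => F) 2) (hg : ⇑g = bclSeq₁ q P U ⇑f) :
    ‖g‖ = ‖f‖ := by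
  have hU' := (norm_map_iff_adjoint_comp_self U).2 hU
  refine lp.norm_eq_of_norm_sq_eq_add_unilateralShift f g (fun n => ‖(1 - P) (U (f n))‖ ^ 2)
    (fun n => ‖P (U (f n))‖ ^ 2) (fun _ => by positivity) (fun _ => by positivity) (fun n => ?_)
    (fun n => by rw [hg, norm_sq_bclSeq₁ hq hP])
  rw [add_comm, hP.norm_sq_apply_add_norm_sq_one_sub_apply, hU']

theorem lp.norm_eq_of_coe_eq_bclSeq₂ (hq : ‖q‖ = 1) (hP : IsStarProjection P)
    (hU : U ∘L adjoint U = 1) (f g : lp (fun _ : ℕ => F) 2) (hg : ⇑g = bclSeq₂ q P U ⇑f) :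
    ‖g‖ = ‖f‖ :=
  lp.norm_eq_of_norm_sq_eq_add_unilateralShift f g (fun n => ‖P (f n)‖ ^ 2)
    (fun n => ‖(1 - P) (f n)‖ ^ 2) (fun _ => by positivity) (fun _ => by positivity)
    (fun _ => hP.norm_sq_apply_add_norm_sq_one_sub_apply _)
    (fun n => by rw [hg, norm_sq_bclSeq₂ hq hP hU])

theorem apply_bclSeq₁ (hP : IsStarProjection P) (f : ℕ → F) (n : ℕ) :
    P (bclSeq₁ q P U f n) = unilateralShift (fun m => q ^ m • P (U (f m))) n := by
  cases n with
  | zero => exact hP.apply_one_sub_apply _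
  | succ n =>
    rw [bclSeq₁, unilateralShift, map_add, map_smul, map_smul, hP.apply_one_sub_apply,
      hP.apply_apply, smul_zero, zero_add]

theorem one_sub_apply_bclSeq₁ (hP : IsStarProjection P) (f : ℕ → F) (n : ℕ) :
    (1 - P) (bclSeq₁ q P U f n) = q ^ n • (1 - P) (U (f n)) := by
  cases n with
  | zero => rw [bclSeq₁, pow_zero, one_smul, hP.one_sub.apply_apply]
  | succ n =>
    rw [bclSeq₁, map_add, map_smul, map_smul, hP.one_sub.apply_apply, hP.one_sub_apply_apply,
      smul_zero, add_zero]

theorem apply_apply_bclSeq₂ (hP : IsStarProjection P) (hU : U ∘L adjoint U = 1) (f : ℕ → F)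
    (n : ℕ) : P (U (bclSeq₂ q P U f n)) = starRingEnd 𝕜 q ^ n • P (f n) := by
  have hU' : ∀ x, U (adjoint U x) = x := fun x => congr($hU x)
  cases n with
  | zero => rw [bclSeq₂, hU', hP.apply_apply, pow_zero, one_smul]
  | succ n =>
    rw [bclSeq₂, map_smul, map_smul, map_add, hU', hU', map_add, hP.apply_apply,
      hP.apply_one_sub_apply, add_zero]

theorem one_sub_apply_apply_bclSeq₂ (hP : IsStarProjection P) (hU : U ∘L adjoint U = 1)
    (f : ℕ → F) (n : ℕ) : (1 - P) (U (bclSeq₂ q P U f n))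
      = unilateralShift (fun m => starRingEnd 𝕜 q ^ (m + 1) • (1 - P) (f m)) n := by
  have hU' : ∀ x, U (adjoint U x) = x := fun x => congr($hU x)
  cases n with
  | zero => rw [bclSeq₂, hU', hP.one_sub_apply_apply, unilateralShift]
  | succ n =>
    rw [bclSeq₂, map_smul, map_smul, map_add, hU', hU', map_add, hP.one_sub_apply_apply,
      hP.one_sub.apply_apply, zero_add, unilateralShift]

theorem bclSeq₁_bclSeq₂ (hq : ‖q‖ = 1) (hP : IsStarProjection P) (hU : U ∘L adjoint U = 1)
    (f : ℕ → F) : bclSeq₁ q P U (bclSeq₂ q P U f) = unilateralShift f := by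
  funext n
  cases n with
  | zero => exact one_sub_apply_apply_bclSeq₂ hP hU f 0
  | succ n =>
    rw [bclSeq₁, one_sub_apply_apply_bclSeq₂ hP hU, apply_apply_bclSeq₂ hP hU, unilateralShift,
      unilateralShift, smul_smul, smul_smul, mul_comm, RCLike.conj_pow_mul_pow_of_norm_eq_one hq,
      mul_comm, RCLike.conj_pow_mul_pow_of_norm_eq_one hq, one_smul, one_smul, add_comm,
      apply_add_one_sub_apply]

theorem bclSeq₂_bclSeq₁ (hq : ‖q‖ = 1) (hP : IsStarProjection P) (hU : adjoint U ∘L U = 1)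
    (f : ℕ → F) : bclSeq₂ q P U (bclSeq₁ q P U f) = starRingEnd 𝕜 q • unilateralShift f := by
  have hU' : ∀ x, adjoint U (U x) = x := fun x => congr($hU x)
  funext n
  cases n with
  | zero =>
    rw [bclSeq₂, apply_bclSeq₁ hP, Pi.smul_apply, unilateralShift, unilateralShift, map_zero,
      smul_zero]
  | succ n =>
    rw [bclSeq₂, apply_bclSeq₁ hP, one_sub_apply_bclSeq₁ hP, unilateralShift, ← map_add, ← smul_add,
      apply_add_one_sub_apply, map_smul, hU', smul_smul, pow_succ, mul_right_comm,
      RCLike.conj_pow_mul_pow_of_norm_eq_one hq, one_mul, Pi.smul_apply, unilateralShift]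

end BCLModel

theorem stmt_4 (q : ℂ) (hq : ‖q‖ = 1)
    {F Ku : Type*} [NormedAddCommGroup F] [InnerProductSpace ℂ F] [CompleteSpace F]
    [NormedAddCommGroup Ku] [InnerProductSpace ℂ Ku] [CompleteSpace Ku]
    (P U : F →L[ℂ] F)
    (hP_idem : P ∘L P = P) (hP_sa : IsSelfAdjoint P)
    (hU₁ : adjoint U ∘L U = 1) (hU₂ : U ∘L adjoint U = 1)
    (W₁ W₂ : Ku →L[ℂ] Ku)
    (hW₁₁ : adjoint W₁ ∘L W₁ = 1)
    (hW₂₁ : adjoint W₂ ∘L W₂ = 1)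
    (hW : W₁ ∘L W₂ = q • (W₂ ∘L W₁))
    (V₁ V₂ : BCLModelSpace F Ku →L[ℂ] BCLModelSpace F Ku)
    -- V₁ = (R_q ⊗ P^⊥U + M_z R_q ⊗ PU) ⊕ W₁, described coordinatewise:
    (hV₁u : ∀ x, (WithLp.equiv 2 _ (V₁ x)).2 = W₁ ((WithLp.equiv 2 _ x).2))
    (hV₁0 : ∀ x, ((WithLp.equiv 2 _ (V₁ x)).1 : ∀ _ : ℕ, F) 0
      = (1 - P) (U (((WithLp.equiv 2 _ x).1 : ∀ _ : ℕ, F) 0)))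
    (hV₁n : ∀ x, ∀ n : ℕ, ((WithLp.equiv 2 _ (V₁ x)).1 : ∀ _ : ℕ, F) (n + 1)
      = q ^ (n + 1) • (1 - P) (U (((WithLp.equiv 2 _ x).1 : ∀ _ : ℕ, F) (n + 1)))
        + q ^ n • P (U (((WithLp.equiv 2 _ x).1 : ∀ _ : ℕ, F) n)))
    -- V₂ = (R_q̄ ⊗ U*P + R_q̄ M_z ⊗ U*P^⊥) ⊕ W₂, described coordinatewise:
    (hV₂u : ∀ x, (WithLp.equiv 2 _ (V₂ x)).2 = W₂ ((WithLp.equiv 2 _ x).2))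
    (hV₂0 : ∀ x, ((WithLp.equiv 2 _ (V₂ x)).1 : ∀ _ : ℕ, F) 0
      = adjoint U (P (((WithLp.equiv 2 _ x).1 : ∀ _ : ℕ, F) 0)))
    (hV₂n : ∀ x, ∀ n : ℕ, ((WithLp.equiv 2 _ (V₂ x)).1 : ∀ _ : ℕ, F) (n + 1)
      = (starRingEnd ℂ q) ^ (n + 1) •
          (adjoint U (P (((WithLp.equiv 2 _ x).1 : ∀ _ : ℕ, F) (n + 1)))
            + adjoint U ((1 - P) (((WithLp.equiv 2 _ x).1 : ∀ _ : ℕ, F) n)))) :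
    adjoint V₁ ∘L V₁ = 1 ∧ adjoint V₂ ∘L V₂ = 1 ∧ V₁ ∘L V₂ = q • (V₂ ∘L V₁) := by
  simp only [WithLp.equiv_apply] at hV₁u hV₁0 hV₁n hV₂u hV₂0 hV₂n
  have hP : IsStarProjection P := ⟨hP_idem, hP_sa⟩
  have hV₁ (x : BCLModelSpace F Ku) : ⇑(V₁ x).ofLp.1 = bclSeq₁ q P U ⇑x.ofLp.1 := by
    funext n; cases n; exacts [hV₁0 x, hV₁n x _]
  have hV₂ (x : BCLModelSpace F Ku) : ⇑(V₂ x).ofLp.1 = bclSeq₂ q P U ⇑x.ofLp.1 := by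
    funext n; cases n; exacts [hV₂0 x, hV₂n x _]
  refine ⟨WithLp.adjoint_comp_self_eq_one_of_norm_map V₁
      (fun x => lp.norm_eq_of_coe_eq_bclSeq₁ hq hP hU₁ _ _ (hV₁ x))
      (fun x => by rw [hV₁u, (norm_map_iff_adjoint_comp_self W₁).2 hW₁₁]),
    WithLp.adjoint_comp_self_eq_one_of_norm_map V₂
      (fun x => lp.norm_eq_of_coe_eq_bclSeq₂ hq hP hU₂ _ _ (hV₂ x))
      (fun x => by rw [hV₂u, (norm_map_iff_adjoint_comp_self W₂).2 hW₂₁]), ?_⟩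
  ext1 x
  refine (WithLp.ext_iff 2).2 (Prod.ext (lp.ext ?_) ?_)
  · rw [comp_apply, smul_apply, WithLp.ofLp_smul, Prod.smul_fst, lp.coeFn_smul, hV₁, hV₂,
      bclSeq₁_bclSeq₂ hq hP hU₂, comp_apply, hV₂, hV₁, bclSeq₂_bclSeq₁ hq hP hU₁, smul_smul,
      Complex.mul_conj', hq, Complex.ofReal_one, one_pow, one_smul]
  · rw [comp_apply, smul_apply, WithLp.ofLp_smul, Prod.smul_snd, comp_apply, hV₁u, hV₂u, hV₂u,
      hV₁u]
    exact congr($hW x.ofLp.2)
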